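/- Let G be a finite simple graph with no isolated vertices and minimum degree δ ≥ 1, let 0 < α ≤ 1/3, and let μ ≥ 0. Consider any run of pushes starting from a state (p₀, r₀) with r₀ ≥ 0 and r₀(v) ≤ μ for every vertex v. Then for every S ⊆ V with |∂S| ≤ δ, the total net flow of mass across the cut into S during the run, namely ∑ over edges {u,v} ∈ ∂S with u ∉ S and v ∈ S of F(u,v), has absolute value at most μ/(2α). -/

import Mathlib

/-!
Let `P(v)` be the total residual mass pushed at `v` during the run. The net flow over `(u, v)`
is `(1 - α)/2 · (P(u)/d(u) - P(v)/d(v))`, and the final residual at `v` is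
`r₀(v) - (1 + α)/2 · P(v) + (1 - α)/2 · ∑_{u ~ v} P(u)/d(u)`, which stays nonnegative.
At a vertex maximising `P/d` this gives `α · P(v) ≤ r₀(v) ≤ μ`, so every ratio `P/d` is
at most `μ/(αδ)` and every net flow is at most `(1 - α)μ/(2αδ)` in absolute value.
Summing over the at most `δ` cut edges gives `(1 - α)μ/(2α) ≤ μ/(2α)`.
-/

open scoped Classical
open Finset

noncomputable section

variable {V : Type*} [Fintype V]

/-- The push operation at vertex `u` on a state `(p, r)` of settled and residual mass:
a fraction `α` of the residual mass at `u` settles at `u`, half of the rest is spread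
evenly to the neighbors of `u`, and half stays at `u`. -/
def push (G : SimpleGraph V) (α : ℝ) (u : V) (s : (V → ℝ) × (V → ℝ)) :
    (V → ℝ) × (V → ℝ) :=
  (fun w => if w = u then s.1 u + α * s.2 u else s.1 w,
   fun w =>
     if w = u then (1 - α) * s.2 u / 2
     else if G.Adj u w then s.2 w + (1 - α) * s.2 u / (2 * (G.degree u : ℝ))
     else s.2 w)

/-- The state obtained from `init` by successively pushing at the vertices of the list `us`. -/
def runState (G : SimpleGraph V) (α : ℝ) (init : (V → ℝ) × (V → ℝ)) (us : List V) :
    (V → ℝ) × (V → ℝ) :=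
  us.foldl (fun s u => push G α u s) init

/-- The net flow over the ordered pair `(u, v)` during the run of pushes at the vertices of
`us` started at state `s`: the sum over pushes at `u` of the mass sent along `(u,v)` minus
the sum over pushes at `v` of the mass sent along `(v,u)`. -/
def netFlow (G : SimpleGraph V) (α : ℝ) (u v : V) :
    (V → ℝ) × (V → ℝ) → List V → ℝ
  | _, [] => 0
  | s, w :: ws =>
      ((if w = u then (1 - α) * s.2 u / (2 * (G.degree u : ℝ)) else 0) -
        (if w = v then (1 - α) * s.2 v / (2 * (G.degree v : ℝ)) else 0)) +
      netFlow G α u v (push G α w s) ws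

/-- The set of edges of `G` with exactly one endpoint in `S`. -/
def bdry (G : SimpleGraph V) (S : Finset V) : Finset (Sym2 V) :=
  G.edgeFinset.filter fun e => ∃ u v, u ∈ S ∧ v ∉ S ∧ e = s(u, v)

def pushedMass (G : SimpleGraph V) (α : ℝ) (u : V) :
    (V → ℝ) × (V → ℝ) → List V → ℝ
  | _, [] => 0
  | s, w :: ws => (if w = u then s.2 u else 0) + pushedMass G α u (push G α w s) ws

lemma netFlow_eq_pushedMass (G : SimpleGraph V) (α : ℝ) (u v : V)
    (s : (V → ℝ) × (V → ℝ)) (us : List V) :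
    netFlow G α u v s us = (1 - α) / 2 *
      (pushedMass G α u s us / G.degree u - pushedMass G α v s us / G.degree v) := by
  induction us generalizing s with
  | nil => simp [netFlow, pushedMass]
  | cons w ws ih =>
    simp only [netFlow, pushedMass, ih]
    split_ifs <;> subst_vars <;> ring

lemma push_snd_eq (G : SimpleGraph V) (α : ℝ) (w v : V) (s : (V → ℝ) × (V → ℝ)) :
    (push G α w s).2 v = s.2 v - (1 + α) / 2 * (if w = v then s.2 v else 0) +
      (if w ∈ G.neighborFinset v then (1 - α) * s.2 w / (2 * G.degree w) else 0) := by
  simp only [push, SimpleGraph.mem_neighborFinset]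
  by_cases hvw : v = w
  · subst hvw
    simp only [if_true, G.irrefl, if_false]
    ring
  · simp only [hvw, Ne.symm hvw, G.adj_comm, if_false]
    split_ifs <;> ring

lemma push_snd_nonneg (G : SimpleGraph V) {α : ℝ} (hα1 : α ≤ 1)
    (w : V) {s : (V → ℝ) × (V → ℝ)} (hs : ∀ v, 0 ≤ s.2 v) (v : V) :
    0 ≤ (push G α w s).2 v := by
  have hsw := hs w
  have hsv := hs v
  have : 0 ≤ 1 - α := by linarith
  simp only [push]
  split_ifs <;> positivity

lemma runState_snd_nonneg (G : SimpleGraph V) {α : ℝ} (hα1 : α ≤ 1)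
    {s : (V → ℝ) × (V → ℝ)} (hs : ∀ v, 0 ≤ s.2 v) (us : List V) (v : V) :
    0 ≤ (runState G α s us).2 v := by
  induction us generalizing s with
  | nil => exact hs v
  | cons w ws ih => exact ih (push_snd_nonneg G hα1 w hs)

lemma pushedMass_nonneg (G : SimpleGraph V) {α : ℝ} (hα1 : α ≤ 1)
    (u : V) {s : (V → ℝ) × (V → ℝ)} (hs : ∀ v, 0 ≤ s.2 v) (us : List V) :
    0 ≤ pushedMass G α u s us := by
  induction us generalizing s with
  | nil => exact le_rfl
  | cons w ws ih =>
    exact add_nonneg (ite_nonneg (hs u) le_rfl) (ih (push_snd_nonneg G hα1 w hs))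

lemma runState_snd_eq (G : SimpleGraph V) (α : ℝ) (s : (V → ℝ) × (V → ℝ)) (us : List V)
    (v : V) :
    (runState G α s us).2 v = s.2 v - (1 + α) / 2 * pushedMass G α v s us +
      ∑ u ∈ G.neighborFinset v, (1 - α) * pushedMass G α u s us / (2 * G.degree u) := by
  induction us generalizing s with
  | nil => simp [runState, pushedMass]
  | cons w ws ih =>
    change (runState G α (push G α w s) ws).2 v = _
    have hsplit : ∀ u : V,
        (1 - α) * pushedMass G α u s (w :: ws) / (2 * G.degree u) =
          (if w = u then (1 - α) * s.2 u / (2 * G.degree u) else 0) +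
            (1 - α) * pushedMass G α u (push G α w s) ws / (2 * G.degree u) := by
      intro u
      simp only [pushedMass]
      split_ifs <;> ring
    rw [ih, sum_congr rfl fun u _ => hsplit u, sum_add_distrib, sum_ite_eq, push_snd_eq,
      pushedMass]
    ring

lemma alpha_mul_pushedMass_le_of_forall_div_degree_le (G : SimpleGraph V) {α : ℝ}
    (hα1 : α ≤ 1) {s : (V → ℝ) × (V → ℝ)} (hs : ∀ v, 0 ≤ s.2 v) (us : List V)
    {v : V} (hv : G.degree v ≠ 0)
    (hmax : ∀ u, pushedMass G α u s us / G.degree u ≤ pushedMass G α v s us / G.degree v) :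
    α * pushedMass G α v s us ≤ s.2 v := by
  have hinflow : ∑ u ∈ G.neighborFinset v, (1 - α) * pushedMass G α u s us / (2 * G.degree u) ≤
      (1 - α) / 2 * pushedMass G α v s us :=
    calc _ = ∑ u ∈ G.neighborFinset v, (1 - α) / 2 * (pushedMass G α u s us / G.degree u) :=
          sum_congr rfl fun u _ => by ring
      _ ≤ (G.neighborFinset v).card • ((1 - α) / 2 * (pushedMass G α v s us / G.degree v)) :=
          sum_le_card_nsmul _ _ _ fun u _ =>
            mul_le_mul_of_nonneg_left (hmax u) (by linarith)
      _ = (1 - α) / 2 * pushedMass G α v s us := by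
          rw [G.card_neighborFinset_eq_degree, nsmul_eq_mul]
          field_simp
  have hfinal := runState_snd_nonneg G hα1 hs us v
  rw [runState_snd_eq] at hfinal
  linarith

lemma pushedMass_div_degree_le (G : SimpleGraph V) {δ : ℕ} (hδd : ∀ v, δ ≤ G.degree v)
    (hδ : 0 < δ) {α : ℝ} (hα0 : 0 < α) (hα1 : α ≤ 1) {μ : ℝ} {s : (V → ℝ) × (V → ℝ)}
    (hs : ∀ v, 0 ≤ s.2 v) (hsμ : ∀ v, s.2 v ≤ μ) (us : List V) (v : V) :
    pushedMass G α v s us / G.degree v ≤ μ / (α * δ) := by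
  obtain ⟨w, -, hw⟩ := exists_max_image univ
    (fun u => pushedMass G α u s us / G.degree u) ⟨v, mem_univ v⟩
  have hdw : (0 : ℝ) < G.degree w := Nat.cast_pos.2 (hδ.trans_le (hδd w))
  have hαP : α * pushedMass G α w s us ≤ μ :=
    (alpha_mul_pushedMass_le_of_forall_div_degree_le G hα1 hs us
      (by exact_mod_cast hdw.ne') fun u => hw u (mem_univ u)).trans (hsμ w)
  calc pushedMass G α v s us / G.degree v ≤ pushedMass G α w s us / G.degree w :=
        hw v (mem_univ v)
    _ ≤ μ / (α * G.degree w) := by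
        rw [div_le_div_iff₀ hdw (by positivity)]
        nlinarith
    _ ≤ μ / (α * δ) := by
        have := (hs w).trans (hsμ w)
        gcongr
        exact hδd w

lemma abs_netFlow_le (G : SimpleGraph V) {δ : ℕ} (hδd : ∀ v, δ ≤ G.degree v) (hδ : 0 < δ)
    {α : ℝ} (hα0 : 0 < α) (hα1 : α ≤ 1) {μ : ℝ} {s : (V → ℝ) × (V → ℝ)}
    (hs : ∀ v, 0 ≤ s.2 v) (hsμ : ∀ v, s.2 v ≤ μ) (us : List V) (u v : V) :
    |netFlow G α u v s us| ≤ (1 - α) / 2 * (μ / (α * δ)) := by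
  rw [netFlow_eq_pushedMass, abs_mul, abs_of_nonneg (by linarith : 0 ≤ (1 - α) / 2)]
  refine mul_le_mul_of_nonneg_left (abs_sub_le_of_nonneg_of_le ?_ ?_ ?_ ?_) (by linarith)
  · exact div_nonneg (pushedMass_nonneg G hα1 u hs us) (Nat.cast_nonneg _)
  · exact pushedMass_div_degree_le G hδd hδ hα0 hα1 hs hsμ us u
  · exact div_nonneg (pushedMass_nonneg G hα1 v hs us) (Nat.cast_nonneg _)
  · exact pushedMass_div_degree_le G hδd hδ hα0 hα1 hs hsμ us v

lemma card_adj_compl_product_le_card_bdry (G : SimpleGraph V) (S : Finset V) :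
    ((Sᶜ ×ˢ S).filter fun p => G.Adj p.1 p.2).card ≤ (bdry G S).card := by
  refine card_le_card_of_injOn (fun p => s(p.1, p.2)) ?_ ?_
  · rintro ⟨a, b⟩ hab
    simp only [coe_filter, mem_product, mem_compl, Set.mem_ofPred_eq] at hab
    simp only [bdry, coe_filter, SimpleGraph.mem_edgeFinset, SimpleGraph.mem_edgeSet,
      Set.mem_ofPred_eq]
    exact ⟨hab.2, b, a, hab.1.2, hab.1.1, Sym2.eq_swap⟩
  · rintro ⟨a, b⟩ hab ⟨c, d⟩ hcd h
    simp only [coe_filter, mem_product, mem_compl, Set.mem_ofPred_eq] at hab hcd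
    rcases Sym2.eq_iff.1 h with ⟨rfl, rfl⟩ | ⟨rfl, -⟩
    · rfl
    · exact absurd hcd.1.2 hab.1.1

theorem stmt10_general {V : Type*} [Fintype V] (G : SimpleGraph V)
    (δ : ℕ) (hδ : δ = G.minDegree) (hδ1 : 1 ≤ δ)
    (α : ℝ) (hα0 : 0 < α) (hα : α ≤ 1 / 3)
    (μ : ℝ) (hμ : 0 ≤ μ)
    (init : (V → ℝ) × (V → ℝ))
    (hr0 : ∀ v : V, 0 ≤ init.2 v)
    (hrμ : ∀ v : V, init.2 v ≤ μ)
    (us : List V) (S : Finset V) (hS : (bdry G S).card ≤ δ) :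
    |∑ u ∈ Sᶜ, ∑ v ∈ S, if G.Adj u v then netFlow G α u v init us else 0| ≤
      μ / (2 * α) := by
  have hδd : ∀ v, δ ≤ G.degree v := fun v => hδ ▸ G.minDegree_le_degree v
  have hcut : (((Sᶜ ×ˢ S).filter fun p => G.Adj p.1 p.2).card : ℝ) ≤ δ := by
    exact_mod_cast (card_adj_compl_product_le_card_bdry G S).trans hS
  rw [← sum_product', ← sum_filter]
  calc _ ≤ ∑ p ∈ (Sᶜ ×ˢ S).filter (fun p => G.Adj p.1 p.2),
          |netFlow G α p.1 p.2 init us| := abs_sum_le_sum_abs _ _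
    _ ≤ ((Sᶜ ×ˢ S).filter fun p => G.Adj p.1 p.2).card •
          ((1 - α) / 2 * (μ / (α * δ))) :=
        sum_le_card_nsmul _ _ _ fun p _ =>
          abs_netFlow_le G hδd hδ1 hα0 (by linarith) hr0 hrμ us p.1 p.2
    _ ≤ δ * ((1 - α) / 2 * (μ / (α * δ))) := by
        rw [nsmul_eq_mul]
        exact mul_le_mul_of_nonneg_right hcut (mul_nonneg (by linarith) (by positivity))
    _ = (1 - α) * μ / (2 * α) := by
        have : (δ : ℝ) ≠ 0 := by exact_mod_cast (by omega : δ ≠ 0)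
        field_simp
    _ ≤ μ / (2 * α) := by
        gcongr
        exact mul_le_of_le_one_left hμ (by linarith)

theorem stmt10 {V : Type*} [Fintype V] [Nonempty V] (G : SimpleGraph V)
    (hd : ∀ v : V, 0 < G.degree v)
    (δ : ℕ) (hδ : δ = G.minDegree) (hδ1 : 1 ≤ δ)
    (α : ℝ) (hα0 : 0 < α) (hα : α ≤ 1 / 3)
    (μ : ℝ) (hμ : 0 ≤ μ)
    (init : (V → ℝ) × (V → ℝ))
    (hr0 : ∀ v : V, 0 ≤ init.2 v)
    (hrμ : ∀ v : V, init.2 v ≤ μ)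
    (us : List V) (S : Finset V) (hS : (bdry G S).card ≤ δ) :
    |∑ u ∈ Sᶜ, ∑ v ∈ S, if G.Adj u v then netFlow G α u v init us else 0| ≤
      μ / (2 * α) :=
  stmt10_general G δ hδ hδ1 α hα0 hα μ hμ init hr0 hrμ us S hS

end
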